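/- With Y = f + ε as above and S = D̃^{-1}Ã, if |f_i − f_j| ≤ Δ on every edge, then for every W ∈ ℝ and L ≥ 1: (1/n) E[‖W S^L Y − f‖_2^2] ≤ (|W| L Δ + |1−W| ‖f‖_2/√n)^2 + W^2 ‖S^L‖_F^2 / n. -/
import Mathlib


open Matrix MeasureTheory

/-- The row-normalized adjacency matrix with self-loops `S = D̃⁻¹Ã`. -/
noncomputable def Smat {n : ℕ} (G : SimpleGraph (Fin n)) [DecidableRel G.Adj] :
    Matrix (Fin n) (Fin n) ℝ :=
  Matrix.of fun i j => ((G.adjMatrix ℝ + 1) i j) / ((G.degree i : ℝ) + 1)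

variable {n : ℕ} (G : SimpleGraph (Fin n)) [DecidableRel G.Adj]

open Finset
lemma Smat_apply (i j : Fin n) :
    Smat G i j = ((if G.Adj i j then (1:ℝ) else 0) + if i = j then 1 else 0) / ((G.degree i : ℝ) + 1) := by
  simp [Smat, Matrix.one_apply, SimpleGraph.adjMatrix_apply]

lemma Smat_nonneg (i j : Fin n) : 0 ≤ Smat G i j := by
  rw [Smat_apply]
  apply div_nonneg
  · positivity
  · positivity

lemma Smat_row_sum (i : Fin n) : ∑ j, Smat G i j = 1 := by
  have hd : (0:ℝ) < (G.degree i : ℝ) + 1 := by positivity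
  have h1 : ∑ j, (if G.Adj i j then (1:ℝ) else 0) = G.degree i := by
    rw [Finset.sum_boole]
    congr 1
    rw [SimpleGraph.degree, SimpleGraph.neighborFinset_eq_filter]
  have h2 : ∑ j, (if i = j then (1:ℝ) else 0) = 1 := by simp
  simp only [Smat_apply, ← Finset.sum_div, Finset.sum_add_distrib, h1, h2]
  field_simp

lemma Smat_ne_zero {i j : Fin n} (h : Smat G i j ≠ 0) : G.Adj i j ∨ i = j := by
  by_contra hc
  push_neg at hc
  rw [Smat_apply] at h
  simp [hc.1, hc.2] at h

def RowStoch {n : ℕ} (A : Matrix (Fin n) (Fin n) ℝ) : Prop :=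
  (∀ i j, 0 ≤ A i j) ∧ ∀ i, ∑ j, A i j = 1

lemma RowStoch.mul {n : ℕ} {A B : Matrix (Fin n) (Fin n) ℝ}
    (hA : RowStoch A) (hB : RowStoch B) : RowStoch (A * B) := by
  constructor
  · intro i j
    rw [Matrix.mul_apply]
    exact Finset.sum_nonneg fun k _ => mul_nonneg (hA.1 i k) (hB.1 k j)
  · intro i
    simp only [Matrix.mul_apply]
    rw [Finset.sum_comm]
    simp only [← Finset.mul_sum, hB.2]
    simpa using hA.2 i

lemma RowStoch.pow {n : ℕ} {A : Matrix (Fin n) (Fin n) ℝ}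
    (hA : RowStoch A) (L : ℕ) (hL : 1 ≤ L) : RowStoch (A ^ L) := by
  induction L with
  | zero => omega
  | succ m ih =>
    rcases Nat.eq_or_lt_of_le hL with h | h
    · simpa [← h] using hA
    · have := ih (by omega)
      rw [pow_succ]
      exact this.mul hA

/-- sup bound: stochastic matrix contracts sup norm. -/
lemma RowStoch.mulVec_abs_le {n : ℕ} {A : Matrix (Fin n) (Fin n) ℝ} (hA : RowStoch A)
    {g : Fin n → ℝ} {C : ℝ} (hg : ∀ j, |g j| ≤ C) (i : Fin n) : |A.mulVec g i| ≤ C := by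
  calc |A.mulVec g i| ≤ ∑ j, |A i j * g j| := by
        rw [Matrix.mulVec, dotProduct]
        exact Finset.abs_sum_le_sum_abs _ _
    _ ≤ ∑ j, A i j * C := by
        refine Finset.sum_le_sum fun j _ => ?_
        rw [abs_mul, abs_of_nonneg (hA.1 i j)]
        exact mul_le_mul_of_nonneg_left (hg j) (hA.1 i j)
    _ = C := by rw [← Finset.sum_mul, hA.2 i, one_mul]

lemma RowStoch.mulVec_sub_self {n : ℕ} {A : Matrix (Fin n) (Fin n) ℝ} (hA : RowStoch A)
    (g : Fin n → ℝ) (i : Fin n) :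
    A.mulVec g i - g i = ∑ j, A i j * (g j - g i) := by
  have : g i = (∑ j, A i j) * g i := by rw [hA.2 i, one_mul]
  rw [Matrix.mulVec, dotProduct]
  calc ∑ j, A i j * g j - g i = ∑ j, A i j * g j - (∑ j, A i j) * g i := by rw [← this]
    _ = ∑ j, A i j * (g j - g i) := by rw [Finset.sum_mul, ← Finset.sum_sub_distrib]; exact Finset.sum_congr rfl fun j _ => by ring

lemma Smat_rowStoch : RowStoch (Smat G) := ⟨Smat_nonneg G, Smat_row_sum G⟩

/-- one step smoothing error -/
lemma Smat_step {Δ : ℝ} (hΔ : 0 ≤ Δ) {f : Fin n → ℝ}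
    (hsm : ∀ i j : Fin n, G.Adj i j → |f i - f j| ≤ Δ) (i : Fin n) :
    |(Smat G).mulVec f i - f i| ≤ Δ := by
  rw [(Smat_rowStoch G).mulVec_sub_self f i]
  calc |∑ j, Smat G i j * (f j - f i)| ≤ ∑ j, |Smat G i j * (f j - f i)| :=
        Finset.abs_sum_le_sum_abs _ _
    _ ≤ ∑ j, Smat G i j * Δ := by
        refine Finset.sum_le_sum fun j _ => ?_
        rw [abs_mul, abs_of_nonneg (Smat_nonneg G i j)]
        rcases eq_or_ne (Smat G i j) 0 with h | h
        · simp [h]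
        · refine mul_le_mul_of_nonneg_left ?_ (Smat_nonneg G i j)
          rcases Smat_ne_zero G h with hadj | heq
          · rw [abs_sub_comm]; exact hsm i j hadj
          · simp [heq, hΔ]
    _ = Δ := by rw [← Finset.sum_mul, Smat_row_sum G i, one_mul]

/-- L-step smoothing error -/
lemma Smat_pow_step {Δ : ℝ} (hΔ : 0 ≤ Δ) {f : Fin n → ℝ}
    (hsm : ∀ i j : Fin n, G.Adj i j → |f i - f j| ≤ Δ) (L : ℕ) (i : Fin n) :
    |(Smat G ^ L).mulVec f i - f i| ≤ L * Δ := by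
  induction L generalizing i with
  | zero => simp
  | succ m ih =>
    have key : (Smat G ^ (m + 1)).mulVec f i - f i
        = (Smat G).mulVec (fun j => (Smat G ^ m).mulVec f j - f j) i
          + ((Smat G).mulVec f i - f i) := by
      rw [pow_succ']
      rw [← Matrix.mulVec_mulVec]
      have : (fun j => (Smat G ^ m).mulVec f j - f j) = (Smat G ^ m).mulVec f - f := rfl
      rw [this, Matrix.mulVec_sub]
      simp [Pi.sub_apply]
    rw [key]
    have h1 : |(Smat G).mulVec (fun j => (Smat G ^ m).mulVec f j - f j) i| ≤ m * Δ :=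
      (Smat_rowStoch G).mulVec_abs_le (fun j => ih j) i
    have h2 := Smat_step G hΔ hsm i
    calc |_ + _| ≤ _ + _ := abs_add_le _ _
      _ ≤ m * Δ + Δ := add_le_add h1 h2
      _ = (m + 1 : ℕ) * Δ := by push_cast; ring

/-- expectation of a quadratic expression in the noise -/
lemma key_integral {n : ℕ} {Ω : Type*} [MeasurableSpace Ω] (μ : MeasureTheory.Measure Ω)
    [MeasureTheory.IsProbabilityMeasure μ] (ε : Fin n → Ω → ℝ)
    (hint : ∀ i : Fin n, MeasureTheory.Integrable (ε i) μ)
    (hint2 : ∀ i j : Fin n, MeasureTheory.Integrable (fun ω => ε i ω * ε j ω) μ)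
    (hmean : ∀ i : Fin n, ∫ ω, ε i ω ∂μ = 0)
    (hcov : ∀ i j : Fin n, ∫ ω, ε i ω * ε j ω ∂μ = if i = j then 1 else 0)
    (C0 : ℝ) (c : Fin n → ℝ) (d : Fin n → Fin n → ℝ) :
    ∫ ω, (C0 + ∑ j, c j * ε j ω + ∑ j, ∑ k, d j k * (ε j ω * ε k ω)) ∂μ
      = C0 + ∑ j, d j j := by
  have i1 : MeasureTheory.Integrable (fun ω => ∑ j, c j * ε j ω) μ :=
    MeasureTheory.integrable_finset_sum _ (fun j _ => (hint j).const_mul (c j))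
  have i2 : MeasureTheory.Integrable (fun ω => ∑ j, ∑ k, d j k * (ε j ω * ε k ω)) μ :=
    MeasureTheory.integrable_finset_sum _ (fun j _ =>
      MeasureTheory.integrable_finset_sum _ (fun k _ => (hint2 j k).const_mul (d j k)))
  have i0 : MeasureTheory.Integrable (fun ω => C0 + ∑ j, c j * ε j ω) μ :=
    (MeasureTheory.integrable_const C0).add i1
  rw [MeasureTheory.integral_add i0 i2,
      MeasureTheory.integral_add (MeasureTheory.integrable_const C0) i1,
      MeasureTheory.integral_const]
  rw [MeasureTheory.integral_finset_sum _ (fun j _ => (hint j).const_mul (c j))]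
  rw [MeasureTheory.integral_finset_sum _ (fun j _ =>
      MeasureTheory.integrable_finset_sum _ (fun k _ => (hint2 j k).const_mul (d j k)))]
  simp only [MeasureTheory.integral_const_mul, hmean, mul_zero, Finset.sum_const_zero]
  have : ∀ j : Fin n, ∫ ω, ∑ k, d j k * (ε j ω * ε k ω) ∂μ = d j j := by
    intro j
    rw [MeasureTheory.integral_finset_sum _ (fun k _ => (hint2 j k).const_mul (d j k))]
    simp only [MeasureTheory.integral_const_mul, hcov]
    simp
  simp [this, measure_univ]

/-- ℓ² triangle inequality for sums -/
lemma sum_add_sq_le {n : ℕ} (x y : Fin n → ℝ) :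
    ∑ i, (x i + y i) ^ 2
      ≤ (Real.sqrt (∑ i, x i ^ 2) + Real.sqrt (∑ i, y i ^ 2)) ^ 2 := by
  have hx : (0:ℝ) ≤ ∑ i, x i ^ 2 := Finset.sum_nonneg fun i _ => sq_nonneg _
  have hy : (0:ℝ) ≤ ∑ i, y i ^ 2 := Finset.sum_nonneg fun i _ => sq_nonneg _
  have hcs : ∑ i, x i * y i ≤ Real.sqrt (∑ i, x i ^ 2) * Real.sqrt (∑ i, y i ^ 2) := by
    have h1 : (∑ i, x i * y i) ^ 2 ≤ (∑ i, x i ^ 2) * (∑ i, y i ^ 2) := by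
      simpa [sq] using Finset.sum_mul_sq_le_sq_mul_sq Finset.univ x y
    calc ∑ i, x i * y i ≤ |∑ i, x i * y i| := le_abs_self _
      _ = Real.sqrt ((∑ i, x i * y i) ^ 2) := (Real.sqrt_sq_eq_abs _).symm
      _ ≤ Real.sqrt ((∑ i, x i ^ 2) * (∑ i, y i ^ 2)) := Real.sqrt_le_sqrt h1
      _ = _ := Real.sqrt_mul hx _
  have e1 : ∑ i, (x i + y i) ^ 2 = ∑ i, x i ^ 2 + 2 * ∑ i, x i * y i + ∑ i, y i ^ 2 := by
    rw [Finset.mul_sum, ← Finset.sum_add_distrib, ← Finset.sum_add_distrib]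
    exact Finset.sum_congr rfl fun i _ => by ring
  rw [e1, add_sq, Real.sq_sqrt hx, Real.sq_sqrt hy]
  nlinarith [hcs]


/-- Bias-variance bound for the GraphSAGE convolution `S` (Theorem 1, first bound). -/
theorem stmt8 {n : ℕ} (G : SimpleGraph (Fin n)) [DecidableRel G.Adj]
    {Ω : Type*} [MeasurableSpace Ω] (μ : MeasureTheory.Measure Ω)
    [MeasureTheory.IsProbabilityMeasure μ] (ε : Fin n → Ω → ℝ)
    (hint : ∀ i : Fin n, MeasureTheory.Integrable (ε i) μ)
    (hint2 : ∀ i j : Fin n, MeasureTheory.Integrable (fun ω => ε i ω * ε j ω) μ)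
    (hmean : ∀ i : Fin n, ∫ ω, ε i ω ∂μ = 0)
    (hcov : ∀ i j : Fin n, ∫ ω, ε i ω * ε j ω ∂μ = if i = j then 1 else 0)
    (f : Fin n → ℝ) (Δ : ℝ) (hΔ : 0 < Δ)
    (hsm : ∀ i j : Fin n, G.Adj i j → |f i - f j| ≤ Δ)
    (W : ℝ) (L : ℕ) (hL : 1 ≤ L) :
    (1 / (n : ℝ)) *
        ∫ ω, ∑ i : Fin n, (W * (Smat G ^ L).mulVec (fun j => f j + ε j ω) i - f i) ^ 2 ∂μ
      ≤ (|W| * L * Δ + |1 - W| * Real.sqrt (∑ i : Fin n, f i ^ 2) / Real.sqrt n) ^ 2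
        + W ^ 2 * (∑ i : Fin n, ∑ j : Fin n, ((Smat G ^ L) i j) ^ 2) / n := by
  rcases Nat.eq_zero_or_pos n with hn | hn
  · subst hn
    simp only [Finset.univ_eq_empty, Finset.sum_empty, MeasureTheory.integral_zero,
      mul_zero, Nat.cast_zero, zero_div, mul_zero, add_zero]
    positivity
  set A := Smat G ^ L with hAdef
  set b : Fin n → ℝ := fun i => W * A.mulVec f i - f i with hbdef
  set C0 : ℝ := ∑ i, b i ^ 2 with hC0
  set c : Fin n → ℝ := fun j => ∑ i, 2 * W * (b i * A i j) with hc
  set d : Fin n → Fin n → ℝ := fun j k => ∑ i, W ^ 2 * (A i j * A i k) with hd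
  -- pointwise expansion of the squared error
  have hpt : ∀ ω, ∑ i : Fin n, (W * A.mulVec (fun j => f j + ε j ω) i - f i) ^ 2
      = C0 + ∑ j, c j * ε j ω + ∑ j, ∑ k, d j k * (ε j ω * ε k ω) := by
    intro ω
    have h1 : ∀ i, W * A.mulVec (fun j => f j + ε j ω) i - f i
        = b i + W * ∑ j, A i j * ε j ω := by
      intro i
      simp only [hbdef, Matrix.mulVec, dotProduct]
      rw [show (∑ j, A i j * (f j + ε j ω))
          = (∑ j, A i j * f j) + ∑ j, A i j * ε j ω by
        rw [← Finset.sum_add_distrib]; exact Finset.sum_congr rfl fun j _ => by ring]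
      ring
    calc ∑ i : Fin n, (W * A.mulVec (fun j => f j + ε j ω) i - f i) ^ 2
        = ∑ i, (b i + W * ∑ j, A i j * ε j ω) ^ 2 :=
          Finset.sum_congr rfl fun i _ => by rw [h1 i]
      _ = ∑ i, (b i ^ 2 + (∑ j, 2 * W * (b i * A i j) * ε j ω)
            + ∑ j, ∑ k, W ^ 2 * (A i j * A i k) * (ε j ω * ε k ω)) := by
          refine Finset.sum_congr rfl fun i _ => ?_
          have hsq : (∑ j, A i j * ε j ω) * (∑ k, A i k * ε k ω)
              = ∑ j, ∑ k, (A i j * ε j ω) * (A i k * ε k ω) :=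
            Finset.sum_mul_sum _ _ _ _
          have e2 : 2 * b i * (W * ∑ j, A i j * ε j ω)
              = ∑ j, 2 * W * (b i * A i j) * ε j ω := by
            simp only [Finset.mul_sum]
            exact Finset.sum_congr rfl fun j _ => by ring
          have hsq2 : (∑ j, A i j * ε j ω) ^ 2
              = ∑ j, ∑ k, (A i j * ε j ω) * (A i k * ε k ω) := by
            rw [pow_two]; exact hsq
          have e3 : (W * ∑ j, A i j * ε j ω) ^ 2
              = ∑ j, ∑ k, W ^ 2 * (A i j * A i k) * (ε j ω * ε k ω) := by
            rw [mul_pow, hsq2]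
            simp only [Finset.mul_sum]
            exact Finset.sum_congr rfl fun j _ =>
              Finset.sum_congr rfl fun k _ => by ring
          rw [add_sq, e2, e3]
      _ = C0 + ∑ j, c j * ε j ω + ∑ j, ∑ k, d j k * (ε j ω * ε k ω) := by
          rw [Finset.sum_add_distrib, Finset.sum_add_distrib]
          congr 1
          · congr 1
            rw [Finset.sum_comm]
            refine Finset.sum_congr rfl fun j _ => ?_
            rw [show c j = ∑ i, 2 * W * (b i * A i j) from rfl, Finset.sum_mul]
          · rw [Finset.sum_comm]
            refine Finset.sum_congr rfl fun j _ => ?_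
            rw [Finset.sum_comm]
            refine Finset.sum_congr rfl fun k _ => ?_
            rw [show d j k = ∑ i, W ^ 2 * (A i j * A i k) from rfl, Finset.sum_mul]
  -- compute the expectation
  have hInt : ∫ ω, ∑ i : Fin n, (W * A.mulVec (fun j => f j + ε j ω) i - f i) ^ 2 ∂μ
      = C0 + ∑ j, d j j := by
    rw [MeasureTheory.integral_congr_ae (Filter.Eventually.of_forall hpt)]
    exact key_integral μ ε hint hint2 hmean hcov C0 c d
  have hdiag : ∑ j, d j j = W ^ 2 * ∑ i : Fin n, ∑ j : Fin n, (A i j) ^ 2 := by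
    calc ∑ j, d j j = ∑ j : Fin n, ∑ i : Fin n, W ^ 2 * (A i j * A i j) := rfl
      _ = ∑ i : Fin n, ∑ j : Fin n, W ^ 2 * (A i j * A i j) := Finset.sum_comm
      _ = W ^ 2 * ∑ i : Fin n, ∑ j : Fin n, (A i j) ^ 2 := by
          rw [Finset.mul_sum]
          refine Finset.sum_congr rfl fun i _ => ?_
          rw [Finset.mul_sum]
          exact Finset.sum_congr rfl fun j _ => by ring
  -- bias bound
  have hnr : (0:ℝ) < n := by exact_mod_cast hn
  have hsn : (0:ℝ) < Real.sqrt n := Real.sqrt_pos.mpr hnr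
  have hLΔ : (0:ℝ) ≤ (L:ℝ) * Δ := by positivity
  have hstep : ∀ i, |A.mulVec f i - f i| ≤ (L:ℝ) * Δ :=
    Smat_pow_step G hΔ.le hsm L
  have hx : Real.sqrt (∑ i, (W * (A.mulVec f i - f i)) ^ 2)
      ≤ |W| * (L:ℝ) * Δ * Real.sqrt n := by
    have h1 : ∑ i, (W * (A.mulVec f i - f i)) ^ 2 ≤ ∑ _i : Fin n, (W * ((L:ℝ) * Δ)) ^ 2 := by
      refine Finset.sum_le_sum fun i _ => ?_
      rw [mul_pow, mul_pow]
      refine mul_le_mul_of_nonneg_left ?_ (sq_nonneg W)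
      calc (A.mulVec f i - f i) ^ 2 = |A.mulVec f i - f i| ^ 2 := (sq_abs _).symm
        _ ≤ ((L:ℝ) * Δ) ^ 2 := by
            exact pow_le_pow_left₀ (abs_nonneg _) (hstep i) 2
    calc Real.sqrt (∑ i, (W * (A.mulVec f i - f i)) ^ 2)
        ≤ Real.sqrt (∑ _i : Fin n, (W * ((L:ℝ) * Δ)) ^ 2) := Real.sqrt_le_sqrt h1
      _ = Real.sqrt ((n:ℝ) * (W * ((L:ℝ) * Δ)) ^ 2) := by
          rw [Finset.sum_const, Finset.card_univ, Fintype.card_fin, nsmul_eq_mul]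
      _ = Real.sqrt n * |W * ((L:ℝ) * Δ)| := by
          rw [Real.sqrt_mul (le_of_lt hnr), Real.sqrt_sq_eq_abs]
      _ = |W| * (L:ℝ) * Δ * Real.sqrt n := by
          rw [abs_mul, abs_of_nonneg hLΔ]; ring
  have hy : Real.sqrt (∑ i, ((W - 1) * f i) ^ 2)
      = |1 - W| * Real.sqrt (∑ i, f i ^ 2) := by
    have : ∑ i, ((W - 1) * f i) ^ 2 = (W - 1) ^ 2 * ∑ i, f i ^ 2 := by
      rw [Finset.mul_sum]; exact Finset.sum_congr rfl fun i _ => by ring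
    rw [this, Real.sqrt_mul (sq_nonneg _), Real.sqrt_sq_eq_abs, abs_sub_comm]
  have hbb : C0 ≤ (|W| * (L:ℝ) * Δ * Real.sqrt n + |1 - W| * Real.sqrt (∑ i, f i ^ 2)) ^ 2 := by
    have hbi : ∀ i, b i = W * (A.mulVec f i - f i) + (W - 1) * f i := by
      intro i; rw [hbdef]; ring
    calc C0 = ∑ i, (W * (A.mulVec f i - f i) + (W - 1) * f i) ^ 2 := by
          rw [hC0]; exact Finset.sum_congr rfl fun i _ => by rw [hbi i]
      _ ≤ (Real.sqrt (∑ i, (W * (A.mulVec f i - f i)) ^ 2)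
            + Real.sqrt (∑ i, ((W - 1) * f i) ^ 2)) ^ 2 := sum_add_sq_le _ _
      _ ≤ (|W| * (L:ℝ) * Δ * Real.sqrt n + |1 - W| * Real.sqrt (∑ i, f i ^ 2)) ^ 2 := by
          refine pow_le_pow_left₀ (by positivity) ?_ 2
          exact add_le_add hx (le_of_eq hy)
  -- assemble
  rw [hInt, hdiag]
  set T : ℝ := |W| * (L:ℝ) * Δ + |1 - W| * Real.sqrt (∑ i, f i ^ 2) / Real.sqrt n with hT
  have hsplit : |W| * (L:ℝ) * Δ * Real.sqrt n + |1 - W| * Real.sqrt (∑ i, f i ^ 2)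
      = Real.sqrt n * T := by
    rw [hT]; field_simp
  have hbias : (1 / (n:ℝ)) * C0 ≤ T ^ 2 := by
    calc (1 / (n:ℝ)) * C0 ≤ (1 / (n:ℝ)) * (Real.sqrt n * T) ^ 2 := by
          refine mul_le_mul_of_nonneg_left ?_ (by positivity)
          rw [← hsplit]; exact hbb
      _ = T ^ 2 := by
          rw [mul_pow, Real.sq_sqrt (le_of_lt hnr)]
          field_simp
  calc (1 / (n:ℝ)) * (C0 + W ^ 2 * ∑ i : Fin n, ∑ j : Fin n, A i j ^ 2)
      = (1 / (n:ℝ)) * C0 + W ^ 2 * (∑ i : Fin n, ∑ j : Fin n, A i j ^ 2) / n := by ring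
    _ ≤ T ^ 2 + W ^ 2 * (∑ i : Fin n, ∑ j : Fin n, A i j ^ 2) / n :=
        add_le_add hbias (le_refl _)
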